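/- arXiv:1401.0154 — 5 statements merged into one kernel-verified Lean document; each statement's English description precedes it below -/
import Mathlib

section
/- Let G=(V,D) be a finite symmetric digraph with weight w and 1-form θ, and let U = SC be the twisted Szegedy walk with discriminant T = d_A d_B*. Let φ ∈ ℝ with sin φ ≠ 0 and let ν ∈ ℓ²(V), ν ≠ 0, satisfy T ν = (cos φ) ν. Then the vector ψ := (I − e^{iφ} S) d_A* ν satisfies ‖ψ‖² = 2 sin²φ · ‖ν‖² (in particular ψ ≠ 0) and U ψ = e^{iφ} ψ; that is, e^{iφ} is an eigenvalue of U with eigenvector ψ. -/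
open Finset

/-- A finite symmetric digraph: finite nonempty vertex and arc sets, origin/terminus maps,
and a fixed-point-free involutive arc reversal with `o (rev e) = t e`; every vertex has
out-degree at least one. -/
structure SymDigraph where
  V : Type
  D : Type
  [fintypeV : Fintype V]
  [fintypeD : Fintype D]
  [decEqV : DecidableEq V]
  [decEqD : DecidableEq D]
  [nonemptyV : Nonempty V]
  o : D → V
  t : D → V
  rev : D → D
  rev_ne : ∀ e, rev e ≠ e
  rev_rev : ∀ e, rev (rev e) = e
  o_rev : ∀ e, o (rev e) = t e
  exists_arc : ∀ u : V, ∃ e : D, o e = u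

attribute [instance] SymDigraph.fintypeV SymDigraph.fintypeD SymDigraph.decEqV
  SymDigraph.decEqD SymDigraph.nonemptyV

namespace SymDigraph

variable (G : SymDigraph)

/-- out-degree of a vertex -/
def deg (u : G.V) : ℕ := (univ.filter fun e => G.o e = u).card

/-- a weight: never zero and with unit square-sum over the arcs leaving each vertex -/
def IsWeight (w : G.D → ℂ) : Prop :=
  (∀ e, w e ≠ 0) ∧
    ∀ u : G.V, ∑ e ∈ univ.filter (fun e => G.o e = u), ‖w e‖ ^ 2 = 1

/-- a 1-form: antisymmetric under arc reversal -/
def IsOneForm (θ : G.D → ℝ) : Prop := ∀ e, θ (G.rev e) = - θ e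

/-- the boundary operator `d_A : ℓ²(D) → ℓ²(V)`, `(d_A φ)(v) = ∑_{e : o e = v} conj (w e) * φ e` -/
noncomputable def dA (w : G.D → ℂ) : (G.D → ℂ) →ₗ[ℂ] (G.V → ℂ) where
  toFun φ := fun v => ∑ e ∈ univ.filter (fun e => G.o e = v), (starRingEnd ℂ) (w e) * φ e
  map_add' φ ψ := by
    funext v
    simp [mul_add, Finset.sum_add_distrib]
  map_smul' c φ := by
    funext v
    simp only [Pi.smul_apply, smul_eq_mul, RingHom.id_apply, Finset.mul_sum]
    exact Finset.sum_congr rfl fun e _ => by ring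

/-- the boundary operator `d_B`, `(d_B φ)(v) = ∑_{e : o e = v} conj (w e) e^{-iθ(e)} φ(ē)` -/
noncomputable def dB (w : G.D → ℂ) (θ : G.D → ℝ) : (G.D → ℂ) →ₗ[ℂ] (G.V → ℂ) where
  toFun φ := fun v => ∑ e ∈ univ.filter (fun e => G.o e = v),
      (starRingEnd ℂ) (w e) * Complex.exp (-(θ e : ℂ) * Complex.I) * φ (G.rev e)
  map_add' φ ψ := by
    funext v
    simp [mul_add, Finset.sum_add_distrib]
  map_smul' c φ := by
    funext v
    simp only [Pi.smul_apply, smul_eq_mul, RingHom.id_apply, Finset.mul_sum]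
    exact Finset.sum_congr rfl fun e _ => by ring

/-- the coboundary operator `d_A* : ℓ²(V) → ℓ²(D)`, `(d_A* f)(e) = w e * f (o e)` -/
noncomputable def dAadj (w : G.D → ℂ) : (G.V → ℂ) →ₗ[ℂ] (G.D → ℂ) where
  toFun f := fun e => w e * f (G.o e)
  map_add' f g := by funext e; simp [mul_add]
  map_smul' c f := by funext e; simp only [Pi.smul_apply, smul_eq_mul, RingHom.id_apply]; ring

/-- the coboundary operator `d_B*`, `(d_B* f)(e) = e^{-iθ(e)} w(ē) f (t e)` -/
noncomputable def dBadj (w : G.D → ℂ) (θ : G.D → ℝ) : (G.V → ℂ) →ₗ[ℂ] (G.D → ℂ) where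
  toFun f := fun e => Complex.exp (-(θ e : ℂ) * Complex.I) * w (G.rev e) * f (G.t e)
  map_add' f g := by funext e; simp [mul_add]
  map_smul' c f := by funext e; simp only [Pi.smul_apply, smul_eq_mul, RingHom.id_apply]; ring

/-- the twisted shift `S`, `(Sφ)(e) = e^{-iθ(e)} φ(ē)` -/
noncomputable def shiftS (θ : G.D → ℝ) : (G.D → ℂ) →ₗ[ℂ] (G.D → ℂ) where
  toFun φ := fun e => Complex.exp (-(θ e : ℂ) * Complex.I) * φ (G.rev e)
  map_add' φ ψ := by funext e; simp [mul_add]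
  map_smul' c φ := by funext e; simp only [Pi.smul_apply, smul_eq_mul, RingHom.id_apply]; ring

/-- the coin operator `C = 2 d_A* d_A - I` -/
noncomputable def coinC (w : G.D → ℂ) : (G.D → ℂ) →ₗ[ℂ] (G.D → ℂ) :=
  (2 : ℂ) • (G.dAadj w ∘ₗ G.dA w) - LinearMap.id

/-- the twisted Szegedy walk `U = S C` -/
noncomputable def walkU (w : G.D → ℂ) (θ : G.D → ℝ) : (G.D → ℂ) →ₗ[ℂ] (G.D → ℂ) :=
  G.shiftS θ ∘ₗ G.coinC w

/-- the discriminant operator `T = d_A d_B*` -/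
noncomputable def discT (w : G.D → ℂ) (θ : G.D → ℝ) : (G.V → ℂ) →ₗ[ℂ] (G.V → ℂ) :=
  G.dA w ∘ₗ G.dBadj w θ

/-- the standard Hermitian inner product on `ℓ²(D)` -/
noncomputable def innD (φ ψ : G.D → ℂ) : ℂ := ∑ e, (starRingEnd ℂ) (φ e) * ψ e

/-- the standard Hermitian inner product on `ℓ²(V)` -/
noncomputable def innV (f g : G.V → ℂ) : ℂ := ∑ v, (starRingEnd ℂ) (f v) * g v

end SymDigraph

/-!
Write `L = d_A* ν` and `c = e^{iφ}`. The weight condition gives `d_A d_A* = I`, and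
`o(ē) = t(e)` gives `S d_A* = d_B*`, so `d_A L = ν` and `d_A (S L) = T ν = cos φ · ν`.
As `S² = I`, the walk `U = S (2 d_A* d_A − I)` maps the span of `L` and `S L` into itself, and
`U ψ = c ψ` reduces to `c² − 2 cos φ · c + 1 = 0`. For the norm, `d_A*` is an isometry, `S` is
unitary and `⟨L, S L⟩ = ⟨ν, T ν⟩ = cos φ ‖ν‖²`, so `‖ψ‖² = 2 ‖ν‖² − 2 cos² φ ‖ν‖²`.
-/

open Complex

theorem reflection_comp_apply_sub_smul {R E F : Type*} [CommRing R] [AddCommGroup E]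
    [Module R E] [AddCommGroup F] [Module R F] (A : F →ₗ[R] E) (B : E →ₗ[R] F) (S : E →ₗ[R] E)
    (ν : F) (μ c : R) (hc : c ^ 2 - 2 * μ * c + 1 = 0) (hBA : B (A ν) = ν)
    (hBSA : B (S (A ν)) = μ • ν) (hSS : S (S (A ν)) = A ν) :
    (S ∘ₗ ((2 : R) • (A ∘ₗ B) - LinearMap.id)) (A ν - c • S (A ν))
      = c • (A ν - c • S (A ν)) := by
  have hB : B (A ν - c • S (A ν)) = (1 - c * μ) • ν := by
    rw [map_sub, map_smul, hBA, hBSA, smul_smul, sub_smul, one_smul]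
  rw [LinearMap.comp_apply, LinearMap.sub_apply, LinearMap.smul_apply, LinearMap.comp_apply, hB,
    LinearMap.id_apply]
  simp only [map_sub, map_smul, hSS]
  linear_combination (norm := module) hc • S (A ν)

theorem norm_sub_exp_smul_sq {E : Type*} [SeminormedAddCommGroup E] [InnerProductSpace ℂ E]
    (x y : E) (φ : ℝ) (hy : ‖y‖ = ‖x‖) (hxy : inner ℂ x y = (Real.cos φ : ℂ) * ‖x‖ ^ 2) :
    ‖x - exp (I * φ) • y‖ ^ 2 = 2 * Real.sin φ ^ 2 * ‖x‖ ^ 2 := by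
  rw [norm_sub_sq (𝕜 := ℂ), inner_smul_right, hxy, norm_smul, hy, mul_comm I, norm_exp_ofReal_mul_I]
  simp only [RCLike.re_to_complex, ← ofReal_pow, ← ofReal_mul, re_mul_ofReal, exp_ofReal_mul_I_re]
  nlinarith [Real.sin_sq_add_cos_sq φ]

theorem exp_I_mul_sq_sub_two_cos_mul_add_one (φ : ℝ) :
    exp (I * φ) ^ 2 - 2 * (Real.cos φ : ℂ) * exp (I * φ) + 1 = 0 := by
  have hcos := two_cos φ
  have hinv : exp (φ * I) * exp (-φ * I) = 1 := by rw [← exp_add]; simp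
  rw [mul_comm I, ofReal_cos]
  linear_combination (-exp (φ * I)) * hcos - hinv

namespace SymDigraph

variable {G : SymDigraph} {w : G.D → ℂ} {θ : G.D → ℝ}

theorem dA_dAadj (hw : G.IsWeight w) (f : G.V → ℂ) : G.dA w (G.dAadj w f) = f := by
  funext v
  show ∑ e ∈ univ.filter (fun e => G.o e = v), (starRingEnd ℂ) (w e) * (w e * f (G.o e)) = f v
  have hterm : ∀ e ∈ univ.filter (fun e => G.o e = v),
      (starRingEnd ℂ) (w e) * (w e * f (G.o e)) = ((‖w e‖ ^ 2 : ℝ) : ℂ) * f v := by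
    intro e he
    rw [(mem_filter.1 he).2, ← normSq_eq_norm_sq, normSq_eq_conj_mul_self]
    ring
  rw [sum_congr rfl hterm, ← sum_mul, ← ofReal_sum, hw.2 v, ofReal_one, one_mul]

theorem shiftS_dAadj (f : G.V → ℂ) : G.shiftS θ (G.dAadj w f) = G.dBadj w θ f := by
  funext e
  show exp (-(θ e : ℂ) * I) * (w (G.rev e) * f (G.o (G.rev e)))
      = exp (-(θ e : ℂ) * I) * w (G.rev e) * f (G.t e)
  rw [G.o_rev, mul_assoc]

theorem dA_shiftS_dAadj (f : G.V → ℂ) : G.dA w (G.shiftS θ (G.dAadj w f)) = G.discT w θ f := by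
  rw [shiftS_dAadj]
  rfl

theorem shiftS_shiftS (hθ : G.IsOneForm θ) (x : G.D → ℂ) : G.shiftS θ (G.shiftS θ x) = x := by
  funext e
  show exp (-(θ e : ℂ) * I) * (exp (-(θ (G.rev e) : ℂ) * I) * x (G.rev (G.rev e))) = x e
  rw [hθ e, G.rev_rev, ← mul_assoc, ← exp_add, ofReal_neg]
  simp

theorem inner_dAadj (f : G.V → ℂ) (x : G.D → ℂ) :
    inner ℂ (WithLp.toLp 2 (G.dAadj w f)) (WithLp.toLp 2 x)
      = inner ℂ (WithLp.toLp 2 f) (WithLp.toLp 2 (G.dA w x)) := by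
  simp only [PiLp.inner_apply, RCLike.inner_apply]
  show ∑ e, x e * (starRingEnd ℂ) (w e * f (G.o e))
      = ∑ v, (∑ e ∈ univ.filter (fun e => G.o e = v), (starRingEnd ℂ) (w e) * x e) *
          (starRingEnd ℂ) (f v)
  rw [← sum_fiberwise univ G.o]
  refine sum_congr rfl fun v _ => ?_
  rw [sum_mul]
  refine sum_congr rfl fun e he => ?_
  rw [(mem_filter.1 he).2, map_mul]
  ring

theorem norm_shiftS (x : G.D → ℂ) :
    ‖WithLp.toLp 2 (G.shiftS θ x)‖ = ‖WithLp.toLp 2 x‖ := by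
  simp only [EuclideanSpace.norm_eq]
  congr 1
  refine Fintype.sum_equiv (Function.Involutive.toPerm G.rev G.rev_rev) _ _ fun e => ?_
  show ‖exp (-(θ e : ℂ) * I) * x (G.rev e)‖ ^ 2 = ‖x (G.rev e)‖ ^ 2
  rw [norm_mul, ← ofReal_neg, norm_exp_ofReal_mul_I, one_mul]

theorem norm_dAadj (hw : G.IsWeight w) (f : G.V → ℂ) :
    ‖WithLp.toLp 2 (G.dAadj w f)‖ = ‖WithLp.toLp 2 f‖ := by
  have h := inner_dAadj (w := w) f (G.dAadj w f)
  rw [dA_dAadj hw, inner_self_eq_norm_sq_to_K, inner_self_eq_norm_sq_to_K] at h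
  exact (sq_eq_sq₀ (norm_nonneg _) (norm_nonneg _)).1 (by exact_mod_cast h)

end SymDigraph

open SymDigraph

/-- If `T ν = cos φ · ν` with `sin φ ≠ 0` and `ν ≠ 0`, then
`ψ = (I − e^{iφ} S) d_A* ν` satisfies `‖ψ‖² = 2 sin²φ ‖ν‖²` (in particular `ψ ≠ 0`) and
`U ψ = e^{iφ} ψ`; that is, `e^{iφ}` is an eigenvalue of the twisted Szegedy walk `U`. -/
theorem szegedy_eigenvalue_lift (G : SymDigraph) (w : G.D → ℂ) (θ : G.D → ℝ)
    (hw : G.IsWeight w) (hθ : G.IsOneForm θ)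
    (φ : ℝ) (hφ : Real.sin φ ≠ 0) (ν : G.V → ℂ) (hν : ν ≠ 0)
    (hT : G.discT w θ ν = (Real.cos φ : ℂ) • ν) :
    (∑ e, ‖
        ((G.dAadj w ν - Complex.exp (Complex.I * (φ : ℂ)) • G.shiftS θ (G.dAadj w ν)) e)‖ ^ 2
      = 2 * Real.sin φ ^ 2 * ∑ v, ‖ν v‖ ^ 2) ∧
    (G.dAadj w ν - Complex.exp (Complex.I * (φ : ℂ)) • G.shiftS θ (G.dAadj w ν)) ≠ 0 ∧
    G.walkU w θ (G.dAadj w ν - Complex.exp (Complex.I * (φ : ℂ)) • G.shiftS θ (G.dAadj w ν))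
      = Complex.exp (Complex.I * (φ : ℂ)) •
        (G.dAadj w ν - Complex.exp (Complex.I * (φ : ℂ)) • G.shiftS θ (G.dAadj w ν)) := by
  set L := G.dAadj w ν
  set ψ := L - exp (I * φ) • G.shiftS θ L
  have hBSA : G.dA w (G.shiftS θ L) = (Real.cos φ : ℂ) • ν := by rw [dA_shiftS_dAadj, hT]
  have hnorm : ‖WithLp.toLp 2 ψ‖ ^ 2 = 2 * Real.sin φ ^ 2 * ‖WithLp.toLp 2 ν‖ ^ 2 := by
    rw [WithLp.toLp_sub, WithLp.toLp_smul, norm_sub_exp_smul_sq _ _ φ (norm_shiftS L),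
      norm_dAadj hw]
    rw [inner_dAadj, hBSA, WithLp.toLp_smul, inner_smul_right, inner_self_eq_norm_sq_to_K,
      norm_dAadj hw]
    rfl
  refine ⟨by simpa only [EuclideanSpace.norm_sq_eq] using hnorm, fun hψ => ?_, ?_⟩
  · have hν' : ‖WithLp.toLp 2 ν‖ ≠ 0 := by simpa using hν
    rw [hψ, WithLp.toLp_zero, norm_zero, zero_pow two_ne_zero] at hnorm
    exact mul_ne_zero (mul_ne_zero two_ne_zero (pow_ne_zero 2 hφ)) (pow_ne_zero 2 hν') hnorm.symm
  · exact reflection_comp_apply_sub_smul _ _ _ ν _ _ (exp_I_mul_sq_sub_two_cos_mul_add_one φ)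
      (dA_dAadj hw ν) hBSA (shiftS_shiftS hθ L)
end

section
/- Let G=(V,D) be a finite symmetric digraph with weight w and 1-form θ. Set L := ran(d_A*) + ran(d_B*) ⊆ ℓ²(D), m₁ := dim ker(T − I), and m₋₁ := dim ker(T + I), where T = d_A d_B*. Then dim( L ∩ ker(S − I) ) = |V| − m₋₁ and dim( L ∩ ker(S + I) ) = |V| − m₁, where S is the twisted shift. -/
open Finset

/-! Since `S d_A* = d_B*` and `S² = 1`, the space `L ∩ ker (S ∓ 1)` is `ran (d_A* ± d_B*)`; since
moreover `d_A d_A* = 1` and `S` is unitary, `ker (d_A* ± d_B*) = ker (T ± 1)`. Rank–nullity for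
`d_A* ± d_B* : ℓ²(V) → ℓ²(D)` gives the two dimension formulas. -/

section Involution

variable {R M N : Type*} [CommRing R] [Invertible (2 : R)] [AddCommGroup M] [Module R M]
  [AddCommGroup N] [Module R N] {S : Module.End R N} {A B : M →ₗ[R] N}

/-- `S` swaps `A f + B g` and `B f + A g`, so an `S`-invariant vector `A f + B g` equals the
average `(A + B) ((f + g) / 2)`. -/
theorem LinearMap.sup_range_inf_ker_sub_id_eq_range_add (hS : S ∘ₗ S = LinearMap.id)
    (hB : S ∘ₗ A = B) :
    (LinearMap.range A ⊔ LinearMap.range B) ⊓ LinearMap.ker (S - LinearMap.id) =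
      LinearMap.range (A + B) := by
  have hSB : S ∘ₗ B = A := by rw [← hB, ← LinearMap.comp_assoc, hS, LinearMap.id_comp]
  have swap : ∀ f g, S (A f + B g) = B f + A g := fun f g => by
    rw [map_add, ← LinearMap.comp_apply, hB, ← LinearMap.comp_apply, hSB]
  apply le_antisymm
  · rintro x ⟨hx, hSx⟩
    obtain ⟨_, ⟨f, rfl⟩, _, ⟨g, rfl⟩, rfl⟩ := Submodule.mem_sup.mp hx
    rw [SetLike.mem_coe, LinearMap.mem_ker, LinearMap.sub_apply, LinearMap.id_apply,
      sub_eq_zero, swap] at hSx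
    refine ⟨⅟(2 : R) • (f + g), ?_⟩
    have sum_eq : A f + A g + (B f + B g) = (2 : R) • (A f + B g) := calc
      _ = (A f + B g) + (B f + A g) := by abel
      _ = (2 : R) • (A f + B g) := by rw [hSx, two_smul]
    rw [map_smul, LinearMap.add_apply, map_add, map_add, sum_eq, smul_smul, invOf_mul_self,
      one_smul]
  · rintro _ ⟨f, rfl⟩
    refine ⟨Submodule.add_mem _ (Submodule.mem_sup_left ⟨f, rfl⟩)
      (Submodule.mem_sup_right ⟨f, rfl⟩), ?_⟩
    rw [SetLike.mem_coe, LinearMap.mem_ker, LinearMap.sub_apply, LinearMap.id_apply,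
      LinearMap.add_apply, swap, add_comm, sub_self]

theorem LinearMap.sup_range_inf_ker_add_id_eq_range_sub (hS : S ∘ₗ S = LinearMap.id)
    (hB : S ∘ₗ A = B) :
    (LinearMap.range A ⊔ LinearMap.range B) ⊓ LinearMap.ker (S + LinearMap.id) =
      LinearMap.range (A - B) := by
  have h := LinearMap.sup_range_inf_ker_sub_id_eq_range_add (S := -S) (A := A) (B := -B)
    (by rw [LinearMap.neg_comp, LinearMap.comp_neg, neg_neg, hS])
    (by rw [LinearMap.neg_comp, hB])
  rwa [LinearMap.range_neg, ← sub_eq_add_neg, ← neg_add', LinearMap.ker_neg] at h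

end Involution

section Isometry

variable {R ι κ : Type*} [CommRing R] [StarRing R] [PartialOrder R] [StarOrderedRing R]
  [NoZeroDivisors R] [Fintype ι] [Fintype κ] {j : (ι → R) →ₗ[R] (κ → R)}
  {p : (κ → R) →ₗ[R] (ι → R)} {S : Module.End R (κ → R)} {B : (ι → R) →ₗ[R] (κ → R)}

/-- If `p (B f) = -f`, then `j f` and `B f = S (j f)` both have squared length `‖f‖²` and their
pairing is `-‖f‖²`, so `‖j f + B f‖² = 0`. -/
theorem LinearMap.ker_add_eq_ker_comp_add_id (hadj : ∀ f φ, star (j f) ⬝ᵥ φ = star f ⬝ᵥ p φ)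
    (hpj : p ∘ₗ j = LinearMap.id) (hS : ∀ φ ψ, star (S φ) ⬝ᵥ S ψ = star φ ⬝ᵥ ψ)
    (hB : S ∘ₗ j = B) :
    LinearMap.ker (j + B) = LinearMap.ker (p ∘ₗ B + LinearMap.id) := by
  have hpj' : ∀ f, p (j f) = f := fun f => by rw [← LinearMap.comp_apply, hpj, LinearMap.id_apply]
  ext f
  simp only [LinearMap.mem_ker, LinearMap.add_apply, LinearMap.comp_apply, LinearMap.id_apply]
  constructor
  · intro h
    have := congrArg p h
    rwa [map_add, hpj', map_zero, add_comm] at this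
  · intro h
    have hpB : p (B f) = -f := eq_neg_of_add_eq_zero_left h
    have jj : star (j f) ⬝ᵥ j f = star f ⬝ᵥ f := by rw [hadj, hpj']
    have jB : star (j f) ⬝ᵥ B f = -(star f ⬝ᵥ f) := by rw [hadj, hpB, dotProduct_neg]
    have Bj : star (B f) ⬝ᵥ j f = -(star f ⬝ᵥ f) := by
      rw [Matrix.star_dotProduct, jB, star_neg, ← Matrix.star_dotProduct]
    have BB : star (B f) ⬝ᵥ B f = star f ⬝ᵥ f := by
      rw [← hB, LinearMap.comp_apply, hS, jj]
    rw [← dotProduct_star_self_eq_zero, star_add, add_dotProduct, dotProduct_add, dotProduct_add,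
      jj, jB, Bj, BB]
    abel

theorem LinearMap.ker_sub_eq_ker_comp_sub_id (hadj : ∀ f φ, star (j f) ⬝ᵥ φ = star f ⬝ᵥ p φ)
    (hpj : p ∘ₗ j = LinearMap.id) (hS : ∀ φ ψ, star (S φ) ⬝ᵥ S ψ = star φ ⬝ᵥ ψ)
    (hB : S ∘ₗ j = B) :
    LinearMap.ker (j - B) = LinearMap.ker (p ∘ₗ B - LinearMap.id) := by
  have h := LinearMap.ker_add_eq_ker_comp_add_id (S := -S) (B := -B) hadj hpj
    (fun φ ψ => by simp only [LinearMap.neg_apply, star_neg, neg_dotProduct, dotProduct_neg,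
      neg_neg, hS])
    (by rw [LinearMap.neg_comp, hB])
  rwa [← sub_eq_add_neg, LinearMap.comp_neg, neg_add_eq_sub,
    ← LinearMap.ker_neg (LinearMap.id - _), neg_sub] at h

end Isometry

namespace SymDigraph

variable (G : SymDigraph) (w : G.D → ℂ) (θ : G.D → ℝ)

theorem dA_apply (φ : G.D → ℂ) (v : G.V) :
    G.dA w φ v = ∑ e ∈ univ.filter (fun e => G.o e = v), (starRingEnd ℂ) (w e) * φ e := rfl

theorem dAadj_apply (f : G.V → ℂ) (e : G.D) : G.dAadj w f e = w e * f (G.o e) := rfl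

theorem shiftS_apply (φ : G.D → ℂ) (e : G.D) :
    G.shiftS θ φ e = Complex.exp (-(θ e : ℂ) * Complex.I) * φ (G.rev e) := rfl

theorem dA_comp_dAadj (hw : ∀ u : G.V, ∑ e ∈ univ.filter (fun e => G.o e = u), ‖w e‖ ^ 2 = 1) :
    G.dA w ∘ₗ G.dAadj w = LinearMap.id := by
  refine LinearMap.ext fun f => funext fun v => ?_
  have summand : ∀ e ∈ univ.filter (fun e => G.o e = v),
      (starRingEnd ℂ) (w e) * (w e * f (G.o e)) = ((‖w e‖ ^ 2 : ℝ) : ℂ) * f v := by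
    intro e he
    rw [(mem_filter.mp he).2, ← mul_assoc, Complex.conj_mul', Complex.ofReal_pow]
  rw [LinearMap.comp_apply, dA_apply, LinearMap.id_apply]
  simp only [dAadj_apply]
  rw [sum_congr rfl summand, ← sum_mul, ← Complex.ofReal_sum, hw v, Complex.ofReal_one, one_mul]

theorem star_dAadj_dotProduct (f : G.V → ℂ) (φ : G.D → ℂ) :
    star (G.dAadj w f) ⬝ᵥ φ = star f ⬝ᵥ G.dA w φ := by
  simp only [dotProduct, Pi.star_apply, RCLike.star_def, dA_apply, dAadj_apply, mul_sum]
  rw [← sum_fiberwise univ G.o]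
  refine sum_congr rfl fun v _ => sum_congr rfl fun e he => ?_
  rw [(mem_filter.mp he).2, map_mul]
  ring

theorem star_shiftS_dotProduct_shiftS (φ ψ : G.D → ℂ) :
    star (G.shiftS θ φ) ⬝ᵥ G.shiftS θ ψ = star φ ⬝ᵥ ψ := by
  have unimodular (x : ℝ) : (starRingEnd ℂ) (Complex.exp (-(x : ℂ) * Complex.I)) *
      Complex.exp (-(x : ℂ) * Complex.I) = 1 := by
    rw [← Complex.exp_conj, ← Complex.exp_add]
    simp
  simp only [dotProduct, Pi.star_apply, RCLike.star_def, shiftS_apply, map_mul]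
  rw [← Equiv.sum_comp (Function.Involutive.toPerm G.rev G.rev_rev)
    (fun e => (starRingEnd ℂ) (φ e) * ψ e)]
  refine sum_congr rfl fun e _ => ?_
  rw [mul_mul_mul_comm, unimodular, one_mul]
  rfl

theorem shiftS_comp_shiftS (hθ : G.IsOneForm θ) : G.shiftS θ ∘ₗ G.shiftS θ = LinearMap.id := by
  refine LinearMap.ext fun φ => funext fun e => ?_
  change Complex.exp _ * (Complex.exp _ * φ (G.rev (G.rev e))) = φ e
  rw [G.rev_rev, hθ, ← mul_assoc, ← Complex.exp_add]
  simp

theorem shiftS_comp_dAadj : G.shiftS θ ∘ₗ G.dAadj w = G.dBadj w θ := by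
  refine LinearMap.ext fun f => funext fun e => ?_
  change Complex.exp _ * (w (G.rev e) * f (G.o (G.rev e))) = _
  rw [G.o_rev, ← mul_assoc]
  rfl

end SymDigraph

/-- With `L = ran d_A* + ran d_B*`, `m₁ = dim ker(T − I)`,
`m₋₁ = dim ker(T + I)`: `dim (L ∩ ker(S − I)) = |V| − m₋₁` and
`dim (L ∩ ker(S + I)) = |V| − m₁`. -/
theorem inherited_space_dimensions (G : SymDigraph) (w : G.D → ℂ) (θ : G.D → ℝ)
    (hw : G.IsWeight w) (hθ : G.IsOneForm θ) :
    (Module.finrank ℂ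
        ↥((LinearMap.range (G.dAadj w) ⊔ LinearMap.range (G.dBadj w θ)) ⊓
          LinearMap.ker (G.shiftS θ - LinearMap.id))
      = Fintype.card G.V -
          Module.finrank ℂ ↥(LinearMap.ker (G.discT w θ + LinearMap.id))) ∧
    (Module.finrank ℂ
        ↥((LinearMap.range (G.dAadj w) ⊔ LinearMap.range (G.dBadj w θ)) ⊓
          LinearMap.ker (G.shiftS θ + LinearMap.id))
      = Fintype.card G.V -
          Module.finrank ℂ ↥(LinearMap.ker (G.discT w θ - LinearMap.id))) := by
  have hS := G.shiftS_comp_shiftS θ hθ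
  have hB := G.shiftS_comp_dAadj w θ
  have hadj := G.star_dAadj_dotProduct w
  have hpj := G.dA_comp_dAadj w hw.2
  have hiso := G.star_shiftS_dotProduct_shiftS θ
  have rank_add := (G.dAadj w + G.dBadj w θ).finrank_range_add_finrank_ker
  have rank_sub := (G.dAadj w - G.dBadj w θ).finrank_range_add_finrank_ker
  rw [Module.finrank_pi] at rank_add rank_sub
  open scoped ComplexOrder in
  constructor
  · rw [LinearMap.sup_range_inf_ker_sub_id_eq_range_add hS hB, SymDigraph.discT,
      ← LinearMap.ker_add_eq_ker_comp_add_id hadj hpj hiso hB]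
    omega
  · rw [LinearMap.sup_range_inf_ker_add_id_eq_range_sub hS hB, SymDigraph.discT,
      ← LinearMap.ker_sub_eq_ker_comp_sub_id hadj hpj hiso hB]
    omega
end

section
/- Let G=(V,D) be a finite connected symmetric digraph, let θ be any 1-form on G, and take the Grover weight w(e) = 1/√deg(o(e)). Then: (a) 1 is an eigenvalue of the discriminant T^{(w,θ)} = d_A d_B* if and only if Σ_{j=1}^n θ(e_j) ∈ 2πℤ for every closed path (e₁,…,e_n) in G; (b) −1 is an eigenvalue of T^{(w,θ)} if and only if Σ_{j=1}^n θ(e_j) + nπ ∈ 2πℤ for every closed path (e₁,…,e_n) of length n in G. In each case the eigenvalue, when it occurs, is simple (multiplicity one). -/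
open Finset

/-- `G` is connected: any two vertices are joined by a (possibly empty) path of arcs. -/
def SymDigraph.Connected (G : SymDigraph) : Prop :=
  ∀ u v : G.V, Relation.ReflTransGen (fun a b => ∃ e : G.D, G.o e = a ∧ G.t e = b) u v

/-- a closed path of length `n`: consecutive arcs are composable, cyclically. -/
def SymDigraph.IsClosedPath (G : SymDigraph) {n : ℕ} (c : Fin n → G.D) : Prop :=
  ∀ j : Fin n,
    G.t (c j) = G.o (c ⟨(j.1 + 1) % n, Nat.mod_lt _ (Nat.lt_of_le_of_lt (Nat.zero_le _) j.2)⟩)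

/-- the Grover weight `w(e) = 1/√(deg (o e))` -/
noncomputable def SymDigraph.groverWeight (G : SymDigraph) : G.D → ℂ :=
  fun e => (Real.sqrt (G.deg (G.o e)) : ℂ)⁻¹

/-!
Write an eigenvector as `f = √deg · g`. For `‖s‖ = 1` the equation `T f = s f` says that
`s · deg v · g v` is the sum of the `deg v` numbers `e^{-iθ(e)} g(t e)` over the arcs leaving
`v`. Summing `|s g(o e) - e^{-iθ(e)} g(t e)|²` over all arcs gives `0` (the equality case of
Cauchy–Schwarz), so `g (t e) = s e^{iθ(e)} g (o e)` for every arc: `g` is a parallel section of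
the `U(1)`-connection `ω = s e^{iθ}`, and conversely every parallel section gives an eigenvector.
On a connected graph a parallel section vanishing at one vertex vanishes everywhere, whence
simplicity, and a nowhere vanishing one exists iff `ω` has trivial holonomy `s^n e^{i∑θ} = 1`
around every closed path. For `s = ±1` this is the condition of the theorem.
-/

lemma Complex.eq_of_sum_normSq_eq_re_sum_mul_conj {ι : Type*} [Fintype ι] {a b : ι → ℂ}
    {r : ℝ} (ha : ∑ i, Complex.normSq (a i) = r) (hb : ∑ i, Complex.normSq (b i) = r)
    (hab : (∑ i, a i * starRingEnd ℂ (b i)).re = r) : a = b := by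
  have hsum : ∑ i, Complex.normSq (a i - b i) = 0 := by
    simp only [Complex.normSq_sub, Finset.sum_sub_distrib, Finset.sum_add_distrib,
      ← Finset.mul_sum, ← Complex.re_sum, ha, hb, hab]
    ring
  funext i
  rw [Finset.sum_eq_zero_iff_of_nonneg fun i _ => Complex.normSq_nonneg _] at hsum
  exact sub_eq_zero.mp (Complex.normSq_eq_zero.mp (hsum i (mem_univ i)))

lemma Complex.exp_ofReal_mul_I_eq_one_iff (r : ℝ) :
    Complex.exp (r * Complex.I) = 1 ↔ ∃ z : ℤ, r = 2 * Real.pi * z := by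
  rw [← Circle.coe_exp, Circle.coe_eq_one, Circle.exp_eq_one]
  exact exists_congr fun z => by rw [mul_comm]

lemma Complex.neg_one_pow_mul_exp_ofReal_mul_I (n : ℕ) (r : ℝ) :
    (-1 : ℂ) ^ n * Complex.exp (r * Complex.I) =
      Complex.exp ((r + n * Real.pi : ℝ) * Complex.I) := by
  rw [← Complex.exp_pi_mul_I, ← Complex.exp_nat_mul, ← Complex.exp_add]
  push_cast
  ring_nf

lemma Submodule.finrank_le_one_of_eq_zero_of_apply_eq_zero {K ι : Type*} [Field K]
    (W : Submodule K (ι → K)) (i : ι) (h : ∀ f ∈ W, f i = 0 → f = 0) :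
    Module.finrank K W ≤ 1 := by
  have hinj : Function.Injective ((LinearMap.proj i : (ι → K) →ₗ[K] K) ∘ₗ W.subtype) := by
    rw [← LinearMap.ker_eq_bot, eq_bot_iff]
    intro f hf
    exact (Submodule.mem_bot K).mpr (Subtype.ext (h f f.2 hf))
  simpa using LinearMap.finrank_le_finrank_of_injective hinj

namespace SymDigraph

variable (G : SymDigraph)

lemma deg_pos (v : G.V) : 0 < G.deg v := by
  obtain ⟨e, he⟩ := G.exists_arc v
  exact Finset.card_pos.mpr ⟨e, by simp [he]⟩

lemma sum_comp_o {M : Type*} [AddCommMonoid M] (φ : G.V → M) :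
    ∑ e, φ (G.o e) = ∑ v, G.deg v • φ v := by
  rw [← Finset.sum_fiberwise univ G.o]
  refine Finset.sum_congr rfl fun v _ => ?_
  rw [Finset.sum_congr rfl fun e he => by rw [(Finset.mem_filter.mp he).2], Finset.sum_const, deg]

lemma sum_comp_t {M : Type*} [AddCommMonoid M] (φ : G.V → M) :
    ∑ e, φ (G.t e) = ∑ e, φ (G.o e) := by
  simp_rw [← G.o_rev]
  exact Equiv.sum_comp (Function.Involutive.toPerm G.rev G.rev_rev) (fun e => φ (G.o e))

def Walk : List G.D → G.V → G.V → Prop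
  | [], u, v => u = v
  | e :: l, u, v => G.o e = u ∧ Walk l (G.t e) v

section Walks

variable {G}

lemma Walk.singleton (e : G.D) : G.Walk [e] (G.o e) (G.t e) := ⟨rfl, rfl⟩

lemma Walk.append {l l' : List G.D} {u v w : G.V} (h : G.Walk l u v) (h' : G.Walk l' v w) :
    G.Walk (l ++ l') u w := by
  induction l generalizing u with
  | nil => rw [Walk] at h; subst h; exact h'
  | cons e l ih => exact ⟨h.1, ih h.2⟩

lemma Connected.exists_walk (hG : G.Connected) (u v : G.V) : ∃ l, G.Walk l u v := by
  induction hG u v with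
  | refl => exact ⟨[], rfl⟩
  | tail _ step ih =>
    obtain ⟨l, hl⟩ := ih
    obtain ⟨e, he, rfl⟩ := step
    exact ⟨l ++ [e], hl.append (he ▸ Walk.singleton e)⟩

lemma Walk.o_getElem_zero {l : List G.D} {u v : G.V} (h : G.Walk l u v) (hl : 0 < l.length) :
    G.o l[0] = u := by
  cases l with
  | nil => simp at hl
  | cons e l => exact h.1

lemma Walk.t_getElem {l : List G.D} {u v : G.V} (h : G.Walk l u v) (j : ℕ) (hj : j < l.length) :
    G.t l[j] = if hj' : j + 1 < l.length then G.o l[j + 1] else v := by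
  induction l generalizing u j with
  | nil => simp at hj
  | cons e l ih =>
    cases j with
    | zero =>
      cases l with
      | nil => exact h.2
      | cons e' l' =>
        have h0 := h.2.o_getElem_zero (Nat.succ_pos l'.length)
        simp only [List.getElem_cons_zero] at h0
        simp [h0]
    | succ j => simpa using ih h.2 j (by simpa using hj)

lemma Walk.isClosedPath {l : List G.D} {u : G.V} (h : G.Walk l u u) :
    G.IsClosedPath (fun j : Fin l.length => l[j]) := by
  intro j
  show G.t l[j.1] = G.o (l[(j.1 + 1) % l.length]'(Nat.mod_lt _ (Nat.zero_lt_of_lt j.2)))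
  rw [h.t_getElem j j.2]
  split_ifs with hj
  · simp [Nat.mod_eq_of_lt hj]
  · have hlen : j.1 + 1 = l.length := by omega
    simp only [hlen, Nat.mod_self]
    exact (h.o_getElem_zero (by omega)).symm

end Walks

def IsParallel (ω : G.D → ℂ) (g : G.V → ℂ) : Prop := ∀ e, g (G.t e) = ω e * g (G.o e)

def HasTrivialHolonomy (ω : G.D → ℂ) : Prop :=
  ∀ (n : ℕ) (c : Fin n → G.D), G.IsClosedPath c → ∏ j, ω (c j) = 1

section ParallelSections

variable {G} {ω : G.D → ℂ}

lemma IsParallel.eq_zero_of_apply_eq_zero (hG : G.Connected) {g : G.V → ℂ}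
    (h : G.IsParallel ω g) {v₀ : G.V} (hv₀ : g v₀ = 0) : g = 0 := by
  suffices ∀ v, g v = 0 from funext this
  intro v
  induction hG v₀ v with
  | refl => exact hv₀
  | tail _ step ih =>
    obtain ⟨e, rfl, rfl⟩ := step
    rw [h e, ih, mul_zero]

lemma IsParallel.hasTrivialHolonomy {g : G.V → ℂ} (h : G.IsParallel ω g) (hg : ∀ v, g v ≠ 0) :
    G.HasTrivialHolonomy ω := by
  rintro (_ | m) c hc
  · simp
  have hrot : ∏ j, g (G.t (c j)) = ∏ j, g (G.o (c j)) := by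
    rw [← Equiv.prod_comp (finRotate (m + 1)) (fun j => g (G.o (c j)))]
    refine Finset.prod_congr rfl fun j _ => ?_
    rw [hc j, finRotate_apply]
    congr 3
    ext
    rw [Fin.val_add, Fin.val_one', Nat.add_mod_mod]
  have htel : ∏ j, g (G.t (c j)) = (∏ j, ω (c j)) * ∏ j, g (G.o (c j)) := by
    rw [← Finset.prod_mul_distrib]
    exact Finset.prod_congr rfl fun j _ => h (c j)
  rwa [hrot, eq_comm, mul_eq_right₀ (Finset.prod_ne_zero_iff.mpr fun j _ => hg _)] at htel

lemma HasTrivialHolonomy.prod_walk_eq_one (hω : G.HasTrivialHolonomy ω) {l : List G.D}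
    {u : G.V} (h : G.Walk l u u) : (l.map ω).prod = 1 := by
  rw [← Fin.prod_univ_fun_getElem]
  exact hω _ _ h.isClosedPath

/-- Transport from a base vertex `v₀` along chosen walks `L v`. Closing up with a walk from `t e`
back to `v₀` compares `L (t e)` with `L (o e) ++ [e]`. -/
lemma HasTrivialHolonomy.exists_isParallel (hG : G.Connected) (hω : G.HasTrivialHolonomy ω) :
    ∃ g : G.V → ℂ, (∀ v, g v ≠ 0) ∧ G.IsParallel ω g := by
  obtain ⟨v₀⟩ := G.nonemptyV
  choose L hL using hG.exists_walk v₀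
  choose M hM using fun v => hG.exists_walk v v₀
  have hclosed (v : G.V) : ((L v).map ω).prod * ((M v).map ω).prod = 1 := by
    rw [← List.prod_append, ← List.map_append]
    exact hω.prod_walk_eq_one ((hL v).append (hM v))
  refine ⟨fun v => ((L v).map ω).prod, fun v => left_ne_zero_of_mul_eq_one (hclosed v),
    fun e => ?_⟩
  have hvia : ((L (G.o e)).map ω).prod * ω e * ((M (G.t e)).map ω).prod = 1 := by
    simpa [mul_assoc] using
      hω.prod_walk_eq_one (((hL (G.o e)).append (Walk.singleton e)).append (hM (G.t e)))
  rw [← hclosed (G.t e)] at hvia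
  have hM0 := right_ne_zero_of_mul_eq_one (hclosed (G.t e))
  simpa [mul_comm] using (mul_right_cancel₀ hM0 hvia).symm

end ParallelSections

section TwistedAdjacency

variable (θ : G.D → ℝ)

noncomputable def phase (s : ℂ) (e : G.D) : ℂ := s * Complex.exp (θ e * Complex.I)

lemma hasTrivialHolonomy_phase_iff (s : ℂ) :
    G.HasTrivialHolonomy (G.phase θ s) ↔ ∀ (n : ℕ), 0 < n → ∀ c : Fin n → G.D,
      G.IsClosedPath c → s ^ n * Complex.exp ((∑ j, θ (c j) : ℝ) * Complex.I) = 1 := by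
  have hprod (n : ℕ) (c : Fin n → G.D) :
      ∏ j, G.phase θ s (c j) = s ^ n * Complex.exp ((∑ j, θ (c j) : ℝ) * Complex.I) := by
    simp only [phase, Finset.prod_mul_distrib, Finset.prod_const, Finset.card_univ,
      Fintype.card_fin, ← Complex.exp_sum, Complex.ofReal_sum, Finset.sum_mul]
  refine forall_congr' fun n => ?_
  rcases n.eq_zero_or_pos with rfl | hn
  · simp
  · simp only [hn, true_implies, hprod]

noncomputable def twistedAdj (g : G.V → ℂ) (v : G.V) : ℂ :=
  ∑ e ∈ univ.filter (fun e => G.o e = v), Complex.exp (-(θ e : ℂ) * Complex.I) * g (G.t e)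

lemma twistedAdj_eq_of_isParallel {s : ℂ} {g : G.V → ℂ} (h : G.IsParallel (G.phase θ s) g)
    (v : G.V) : G.twistedAdj θ g v = s * G.deg v * g v := by
  have hterm : ∀ e ∈ univ.filter (fun e => G.o e = v),
      Complex.exp (-(θ e : ℂ) * Complex.I) * g (G.t e) = s * g v := by
    intro e he
    rw [h e, phase, (Finset.mem_filter.mp he).2, neg_mul, Complex.exp_neg]
    field_simp [Complex.exp_ne_zero]
  rw [twistedAdj, Finset.sum_congr rfl hterm, Finset.sum_const, deg, nsmul_eq_mul]
  ring

lemma isParallel_of_twistedAdj_eq {s : ℂ} (hs : ‖s‖ = 1) {g : G.V → ℂ}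
    (h : ∀ v, G.twistedAdj θ g v = s * G.deg v * g v) : G.IsParallel (G.phase θ s) g := by
  have hs' : Complex.normSq s = 1 := by rw [Complex.normSq_eq_norm_sq, hs, one_pow]
  set r := ∑ v, G.deg v • Complex.normSq (g v)
  have hcross : ∑ e, Complex.exp (-(θ e : ℂ) * Complex.I) * g (G.t e) *
      starRingEnd ℂ (s * g (G.o e)) = r := by
    rw [← Finset.sum_fiberwise univ G.o]
    push_cast [r]
    refine Finset.sum_congr rfl fun v _ => ?_
    rw [Finset.sum_congr rfl fun e he => by rw [(Finset.mem_filter.mp he).2], ← Finset.sum_mul,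
      ← twistedAdj, h v, nsmul_eq_mul, map_mul]
    rw [show s * G.deg v * g v * (starRingEnd ℂ s * starRingEnd ℂ (g v)) =
      s * starRingEnd ℂ s * G.deg v * (g v * starRingEnd ℂ (g v)) by ring, Complex.mul_conj,
      Complex.mul_conj, hs', Complex.ofReal_one, one_mul]
  have key := Complex.eq_of_sum_normSq_eq_re_sum_mul_conj
    (a := fun e => Complex.exp (-(θ e : ℂ) * Complex.I) * g (G.t e))
    (b := fun e => s * g (G.o e)) (r := r) ?_ ?_ (by rw [hcross]; simp [r])
  · intro e
    calc g (G.t e) = Complex.exp (θ e * Complex.I) *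
          (Complex.exp (-(θ e : ℂ) * Complex.I) * g (G.t e)) := by
          rw [← mul_assoc, ← Complex.exp_add, neg_mul, add_neg_cancel, Complex.exp_zero, one_mul]
      _ = G.phase θ s e * g (G.o e) := by rw [congrFun key e, phase]; ring
  · simp only [Complex.normSq_mul, Complex.normSq_eq_norm_sq (Complex.exp _),
      ← Complex.ofReal_neg, Complex.norm_exp_ofReal_mul_I, one_pow, one_mul]
    rw [G.sum_comp_t fun v => Complex.normSq (g v)]
    exact G.sum_comp_o fun v => Complex.normSq (g v)
  · simp only [Complex.normSq_mul, hs', one_mul]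
    exact G.sum_comp_o fun v => Complex.normSq (g v)

end TwistedAdjacency

noncomputable def sqrtDeg (v : G.V) : ℂ := (Real.sqrt (G.deg v) : ℂ)

lemma sqrtDeg_ne_zero (v : G.V) : G.sqrtDeg v ≠ 0 := by
  simpa [sqrtDeg] using (G.deg_pos v).ne'

lemma sqrtDeg_mul_self (v : G.V) : G.sqrtDeg v * G.sqrtDeg v = G.deg v := by
  rw [sqrtDeg, ← Complex.ofReal_mul, Real.mul_self_sqrt (Nat.cast_nonneg _)]
  norm_cast

lemma conj_groverWeight (e : G.D) : starRingEnd ℂ (G.groverWeight e) = G.groverWeight e := by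
  simp [groverWeight]

section Eigenvectors

variable (θ : G.D → ℝ)

lemma discT_groverWeight_sqrtDeg_mul (g : G.V → ℂ) (v : G.V) :
    G.discT G.groverWeight θ (fun u => G.sqrtDeg u * g u) v =
      (G.sqrtDeg v)⁻¹ * G.twistedAdj θ g v := by
  simp only [discT, dA, dBadj, LinearMap.comp_apply, LinearMap.coe_mk, AddHom.coe_mk, twistedAdj,
    Finset.mul_sum]
  refine Finset.sum_congr rfl fun e he => ?_
  rw [conj_groverWeight, groverWeight, groverWeight, G.o_rev, (Finset.mem_filter.mp he).2]
  have := G.sqrtDeg_ne_zero (G.t e)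
  simp only [sqrtDeg] at this ⊢
  field_simp

lemma discT_groverWeight_eq_smul_iff (s : ℂ) (g : G.V → ℂ) :
    G.discT G.groverWeight θ (fun u => G.sqrtDeg u * g u) = s • (fun u => G.sqrtDeg u * g u) ↔
      ∀ v, G.twistedAdj θ g v = s * G.deg v * g v := by
  rw [funext_iff]
  refine forall_congr' fun v => ?_
  rw [discT_groverWeight_sqrtDeg_mul, Pi.smul_apply, smul_eq_mul,
    inv_mul_eq_iff_eq_mul₀ (G.sqrtDeg_ne_zero v), ← G.sqrtDeg_mul_self v]
  constructor <;> intro h <;> linear_combination h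

variable {G} {s : ℂ}

lemma isParallel_of_discT_groverWeight_eq_smul (hs : ‖s‖ = 1) {f : G.V → ℂ}
    (hf : G.discT G.groverWeight θ f = s • f) :
    G.IsParallel (G.phase θ s) (fun v => f v / G.sqrtDeg v) := by
  refine G.isParallel_of_twistedAdj_eq θ hs ((G.discT_groverWeight_eq_smul_iff θ s _).mp ?_)
  simpa only [mul_div_cancel₀ _ (G.sqrtDeg_ne_zero _)] using hf

lemma eq_zero_of_discT_groverWeight_eq_smul (hG : G.Connected) (hs : ‖s‖ = 1) {f : G.V → ℂ}
    (hf : G.discT G.groverWeight θ f = s • f) {v₀ : G.V} (hv₀ : f v₀ = 0) : f = 0 := by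
  have hg := (isParallel_of_discT_groverWeight_eq_smul θ hs hf).eq_zero_of_apply_eq_zero hG
    (show f v₀ / G.sqrtDeg v₀ = 0 by rw [hv₀, zero_div])
  funext v
  simpa [G.sqrtDeg_ne_zero v] using congrFun hg v

theorem exists_discT_groverWeight_eq_smul_iff (hG : G.Connected) (hs : ‖s‖ = 1) :
    (∃ f : G.V → ℂ, f ≠ 0 ∧ G.discT G.groverWeight θ f = s • f) ↔
      G.HasTrivialHolonomy (G.phase θ s) := by
  constructor
  · rintro ⟨f, hf0, hf⟩
    refine (isParallel_of_discT_groverWeight_eq_smul θ hs hf).hasTrivialHolonomy fun v hv => ?_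
    exact hf0 (eq_zero_of_discT_groverWeight_eq_smul θ hG hs hf
      ((div_eq_zero_iff.mp hv).resolve_right (G.sqrtDeg_ne_zero v)))
  · intro hω
    obtain ⟨g, hg0, hg⟩ := hω.exists_isParallel hG
    refine ⟨fun v => G.sqrtDeg v * g v, fun h => ?_,
      (G.discT_groverWeight_eq_smul_iff θ s g).mpr (G.twistedAdj_eq_of_isParallel θ hg)⟩
    obtain ⟨v⟩ := G.nonemptyV
    exact mul_ne_zero (G.sqrtDeg_ne_zero v) (hg0 v) (congrFun h v)

theorem finrank_ker_discT_groverWeight_sub_smul_le_one (hG : G.Connected) (hs : ‖s‖ = 1) :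
    Module.finrank ℂ (LinearMap.ker (G.discT G.groverWeight θ - s • LinearMap.id)) ≤ 1 :=
  Submodule.finrank_le_one_of_eq_zero_of_apply_eq_zero _ (Classical.arbitrary G.V) fun _ hf =>
    eq_zero_of_discT_groverWeight_eq_smul θ hG hs (sub_eq_zero.mp hf)

end Eigenvectors

end SymDigraph

theorem grover_discriminant_pm_one_general (G : SymDigraph) (hG : G.Connected)
    (θ : G.D → ℝ) :
    ((∃ f : G.V → ℂ, f ≠ 0 ∧ G.discT G.groverWeight θ f = f) ↔
      ∀ (n : ℕ), 0 < n → ∀ c : Fin n → G.D, G.IsClosedPath c →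
        ∃ z : ℤ, ∑ j, θ (c j) = 2 * Real.pi * z) ∧
    ((∃ f : G.V → ℂ, f ≠ 0 ∧ G.discT G.groverWeight θ f = -f) ↔
      ∀ (n : ℕ), 0 < n → ∀ c : Fin n → G.D, G.IsClosedPath c →
        ∃ z : ℤ, (∑ j, θ (c j)) + n * Real.pi = 2 * Real.pi * z) ∧
    Module.finrank ℂ ↥(LinearMap.ker (G.discT G.groverWeight θ - LinearMap.id)) ≤ 1 ∧
    Module.finrank ℂ ↥(LinearMap.ker (G.discT G.groverWeight θ + LinearMap.id)) ≤ 1 := by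
  have h1 : ‖(1 : ℂ)‖ = 1 := norm_one
  have hm1 : ‖(-1 : ℂ)‖ = 1 := by rw [norm_neg, norm_one]
  refine ⟨?_, ?_, ?_, ?_⟩
  · simpa only [one_smul, SymDigraph.hasTrivialHolonomy_phase_iff, one_pow, one_mul,
      Complex.exp_ofReal_mul_I_eq_one_iff] using G.exists_discT_groverWeight_eq_smul_iff θ hG h1
  · simpa only [neg_one_smul, SymDigraph.hasTrivialHolonomy_phase_iff,
      Complex.neg_one_pow_mul_exp_ofReal_mul_I, Complex.exp_ofReal_mul_I_eq_one_iff]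
      using G.exists_discT_groverWeight_eq_smul_iff θ hG hm1
  · rw [show G.discT G.groverWeight θ - LinearMap.id =
        G.discT G.groverWeight θ - (1 : ℂ) • LinearMap.id by rw [one_smul]]
    exact G.finrank_ker_discT_groverWeight_sub_smul_le_one θ hG h1
  · rw [show G.discT G.groverWeight θ + LinearMap.id =
        G.discT G.groverWeight θ - (-1 : ℂ) • LinearMap.id by ext f v; simp]
    exact G.finrank_ker_discT_groverWeight_sub_smul_le_one θ hG hm1

/-- For a connected finite symmetric digraph with the Grover weight and any
1-form `θ`: (a) `1` is an eigenvalue of `T^{(w,θ)}` iff `∑_j θ(e_j) ∈ 2πℤ` for every closed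
path `(e₁,…,e_n)`; (b) `−1` is an eigenvalue of `T^{(w,θ)}` iff `∑_j θ(e_j) + nπ ∈ 2πℤ` for
every closed path of length `n`. In each case the eigenvalue, when it occurs, is simple. -/
theorem grover_discriminant_pm_one (G : SymDigraph) (hG : G.Connected)
    (θ : G.D → ℝ) (hθ : G.IsOneForm θ) :
    ((∃ f : G.V → ℂ, f ≠ 0 ∧ G.discT G.groverWeight θ f = f) ↔
      ∀ (n : ℕ), 0 < n → ∀ c : Fin n → G.D, G.IsClosedPath c →
        ∃ z : ℤ, ∑ j, θ (c j) = 2 * Real.pi * z) ∧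
    ((∃ f : G.V → ℂ, f ≠ 0 ∧ G.discT G.groverWeight θ f = -f) ↔
      ∀ (n : ℕ), 0 < n → ∀ c : Fin n → G.D, G.IsClosedPath c →
        ∃ z : ℤ, (∑ j, θ (c j)) + n * Real.pi = 2 * Real.pi * z) ∧
    Module.finrank ℂ ↥(LinearMap.ker (G.discT G.groverWeight θ - LinearMap.id)) ≤ 1 ∧
    Module.finrank ℂ ↥(LinearMap.ker (G.discT G.groverWeight θ + LinearMap.id)) ≤ 1 :=
  grover_discriminant_pm_one_general G hG θ
end

section
/- Let d ≥ 2 and let U = SC be the Grover walk on ℤ^d. Fix x ∈ ℤ^d and indices 1 ≤ i < j ≤ d, and let the unit-square cycle consist of the four arcs f₁ = (x,(i,+1)), f₂ = (x+e_i,(j,+1)), f₃ = (x+e_i+e_j,(i,−1)), f₄ = (x+e_j,(j,−1)), with reversed arcs f̄₁ = (x+e_i,(i,−1)), f̄₂ = (x+e_i+e_j,(j,−1)), f̄₃ = (x+e_j,(i,+1)), f̄₄ = (x,(j,+1)). Define γ := Σ_{m=1}^4 (δ_{f_m} − δ_{f̄_m}) and τ := Σ_{m=1}^4 (−1)^m (δ_{f_m}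 + δ_{f̄_m}) in ℓ²(ℤ^d × A). Then U γ = γ and U τ = −τ; in particular 1 and −1 are eigenvalues of U with compactly supported eigenvectors. -/
open Finset

/-- sites of the `d`-dimensional integer lattice -/
abbrev Site (d : ℕ) := Fin d → ℤ

/-- labels of the `2d` arcs leaving each site: a direction `j` and a sign (`true ↔ +1`) -/
abbrev ArcLabel (d : ℕ) := Fin d × Bool

/-- the sign `σ ∈ {+1, −1}` of an arc label -/
def sgn (b : Bool) : ℤ := if b then 1 else -1

/-- the endpoint `x + σ e_j` of the arc `(x, (j, σ))` -/
def stepSite {d : ℕ} (x : Site d) (j : Fin d) (b : Bool) : Site d :=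
  x + Pi.single j (sgn b)

/-- the flip-flop shift `(Sψ)(x,(j,σ)) = ψ(x + σ e_j, (j, −σ))` -/
def groverShift {d : ℕ} (ψ : Site d × ArcLabel d → ℂ) : Site d × ArcLabel d → ℂ :=
  fun p => ψ (stepSite p.1 p.2.1 p.2.2, (p.2.1, !p.2.2))

/-- the sitewise Grover coin `(Cψ)(x,a) = (1/d) ∑_{b} ψ(x,b) − ψ(x,a)` -/
noncomputable def groverCoin {d : ℕ} (ψ : Site d × ArcLabel d → ℂ) : Site d × ArcLabel d → ℂ :=
  fun p => (1 / (d : ℂ)) * (∑ b : ArcLabel d, ψ (p.1, b)) - ψ p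

/-- the Grover walk `U = SC` on `ℤ^d` -/
noncomputable def groverU {d : ℕ} (ψ : Site d × ArcLabel d → ℂ) : Site d × ArcLabel d → ℂ :=
  groverShift (groverCoin ψ)

/-- the standard basis vector `δ_q` of `ℓ²(ℤ^d × A)` -/
noncomputable def deltaPt {d : ℕ} (q : Site d × ArcLabel d) : Site d × ArcLabel d → ℂ :=
  fun p => if p = q then 1 else 0

-- auxiliary lemmas

lemma sum_deltaPt' {d : ℕ} (z : Site d) (a : ArcLabel d) (y : Site d) :
    ∑ b : ArcLabel d, deltaPt (z, a) (y, b) = if y = z then 1 else 0 := by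
  by_cases h : y = z
  · subst h
    have h2 : ∀ b : ArcLabel d, deltaPt (y, a) (y, b) = if b = a then 1 else 0 := by
      intro b; simp [deltaPt, Prod.ext_iff]
    simp [h2]
  · simp [deltaPt, Prod.ext_iff, h]

lemma rev_rev {d : ℕ} (p : Site d × ArcLabel d) :
    (stepSite (stepSite p.1 p.2.1 p.2.2) p.2.1 (!p.2.2), (p.2.1, !(!p.2.2))) = p := by
  rcases p with ⟨y, k, b⟩
  simp only [Bool.not_not]
  refine Prod.ext ?_ rfl
  show y + Pi.single k (sgn b) + Pi.single k (sgn (!b)) = y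
  funext t
  cases b <;> simp [sgn, Pi.single_apply] <;> split_ifs <;> ring

lemma shift_deltaPt {d : ℕ} (q : Site d × ArcLabel d) :
    groverShift (deltaPt q) = deltaPt (stepSite q.1 q.2.1 q.2.2, (q.2.1, !q.2.2)) := by
  funext p
  simp only [groverShift, deltaPt]
  congr 1
  refine propext ⟨fun h => ?_, fun h => ?_⟩
  · rw [← h]; exact (rev_rev p).symm
  · rw [h]; exact rev_rev q

lemma add_single_ne {d : ℕ} (y : Site d) (k : Fin d) (c : ℤ) (hc : c ≠ 0) :
    y + Pi.single k c ≠ y := by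
  intro h
  have := congrFun h k
  simp [Pi.single_apply] at this
  exact hc this

lemma shift_add {d : ℕ} (f g : Site d × ArcLabel d → ℂ) :
    groverShift (f + g) = groverShift f + groverShift g := rfl

lemma shift_sub {d : ℕ} (f g : Site d × ArcLabel d → ℂ) :
    groverShift (f - g) = groverShift f - groverShift g := rfl

lemma shift_neg {d : ℕ} (f : Site d × ArcLabel d → ℂ) :
    groverShift (-f) = -groverShift f := rfl

lemma coin_of_sum_zero {d : ℕ} (ψ : Site d × ArcLabel d → ℂ)
    (h : ∀ y, ∑ b : ArcLabel d, ψ (y, b) = 0) : groverCoin ψ = -ψ := by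
  funext p; simp [groverCoin, h p.1]

-- the two cycle vectors, explicitly

noncomputable def gam (d : ℕ) (x : Site d) (i j : Fin d) : Site d × ArcLabel d → ℂ :=
  deltaPt (x, (i, true)) - deltaPt (x + Pi.single i 1, (i, false)) +
    (deltaPt (x + Pi.single i 1, (j, true)) - deltaPt (x + Pi.single i 1 + Pi.single j 1, (j, false))) +
    (deltaPt (x + Pi.single i 1 + Pi.single j 1, (i, false)) - deltaPt (x + Pi.single j 1, (i, true))) +
    (deltaPt (x + Pi.single j 1, (j, false)) - deltaPt (x, (j, true)))

noncomputable def tav (d : ℕ) (x : Site d) (i j : Fin d) : Site d × ArcLabel d → ℂ :=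
  -(deltaPt (x, (i, true)) + deltaPt (x + Pi.single i 1, (i, false))) +
    (deltaPt (x + Pi.single i 1, (j, true)) + deltaPt (x + Pi.single i 1 + Pi.single j 1, (j, false))) -
    (deltaPt (x + Pi.single i 1 + Pi.single j 1, (i, false)) + deltaPt (x + Pi.single j 1, (i, true))) +
    (deltaPt (x + Pi.single j 1, (j, false)) + deltaPt (x, (j, true)))

section main
variable {d : ℕ} (x : Site d) (i j : Fin d)

lemma shift_deltaPt2 {d : ℕ} (q1 r1 : Site d) (q2 r2 : Fin d) (qb rb : Bool)
    (h1 : stepSite q1 q2 qb = r1) (h2 : q2 = r2) (h3 : (!qb) = rb) :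
    groverShift (deltaPt (q1, (q2, qb))) = deltaPt (r1, (r2, rb)) := by
  subst h1 h2 h3
  exact shift_deltaPt _

lemma cancel1 (y : Site d) (k : Fin d) :
    stepSite (y + Pi.single k 1) k false = y := by
  funext t
  simp [stepSite, sgn, Pi.single_apply]
  split_ifs <;> ring

lemma S1 : groverShift (deltaPt ((x, (i, true)) : Site d × ArcLabel d))
    = deltaPt (x + Pi.single i 1, (i, false)) :=
  shift_deltaPt2 _ _ _ _ _ _ rfl rfl rfl

lemma S2 : groverShift (deltaPt ((x + Pi.single i 1, (j, true)) : Site d × ArcLabel d))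
    = deltaPt (x + Pi.single i 1 + Pi.single j 1, (j, false)) :=
  shift_deltaPt2 _ _ _ _ _ _ rfl rfl rfl

lemma S3 : groverShift (deltaPt ((x + Pi.single i 1 + Pi.single j 1, (i, false)) : Site d × ArcLabel d))
    = deltaPt (x + Pi.single j 1, (i, true)) := by
  refine shift_deltaPt2 _ _ _ _ _ _ ?_ rfl rfl
  funext t
  simp [stepSite, sgn, Pi.single_apply]
  split_ifs <;> ring

lemma S4 : groverShift (deltaPt ((x + Pi.single j 1, (j, false)) : Site d × ArcLabel d))
    = deltaPt (x, (j, true)) :=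
  shift_deltaPt2 _ _ _ _ _ _ (cancel1 x j) rfl rfl

lemma S5 : groverShift (deltaPt ((x + Pi.single i 1, (i, false)) : Site d × ArcLabel d))
    = deltaPt (x, (i, true)) :=
  shift_deltaPt2 _ _ _ _ _ _ (cancel1 x i) rfl rfl

lemma S6 : groverShift (deltaPt ((x + Pi.single i 1 + Pi.single j 1, (j, false)) : Site d × ArcLabel d))
    = deltaPt (x + Pi.single i 1, (j, true)) :=
  shift_deltaPt2 _ _ _ _ _ _ (cancel1 (x + Pi.single i 1) j) rfl rfl

lemma S7 : groverShift (deltaPt ((x + Pi.single j 1, (i, true)) : Site d × ArcLabel d))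
    = deltaPt (x + Pi.single i 1 + Pi.single j 1, (i, false)) := by
  refine shift_deltaPt2 _ _ _ _ _ _ ?_ rfl rfl
  funext t
  simp [stepSite, sgn, Pi.single_apply]
  split_ifs <;> ring

lemma S8 : groverShift (deltaPt ((x, (j, true)) : Site d × ArcLabel d))
    = deltaPt (x + Pi.single j 1, (j, false)) :=
  shift_deltaPt2 _ _ _ _ _ _ rfl rfl rfl

lemma shift_gam : groverShift (gam d x i j) = -(gam d x i j) := by
  simp only [gam, shift_add, shift_sub, S1, S2, S3, S4, S5, S6, S7, S8]
  abel

lemma shift_tav : groverShift (tav d x i j) = tav d x i j := by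
  simp only [tav, shift_add, shift_sub, shift_neg, S1, S2, S3, S4, S5, S6, S7, S8]
  abel

lemma coin_gam : groverCoin (gam d x i j) = -(gam d x i j) := by
  apply coin_of_sum_zero
  intro y
  simp only [gam, Pi.add_apply, Pi.sub_apply, Finset.sum_add_distrib,
    Finset.sum_sub_distrib, sum_deltaPt']
  ring

lemma coin_tav : groverCoin (tav d x i j) = -(tav d x i j) := by
  apply coin_of_sum_zero
  intro y
  simp only [tav, Pi.add_apply, Pi.sub_apply, Pi.neg_apply, Finset.sum_add_distrib,
    Finset.sum_sub_distrib, Finset.sum_neg_distrib, sum_deltaPt']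
  ring

lemma U_gam : groverU (gam d x i j) = gam d x i j := by
  show groverShift (groverCoin (gam d x i j)) = gam d x i j
  rw [coin_gam, shift_neg, shift_gam, neg_neg]

lemma U_tav : groverU (tav d x i j) = -(tav d x i j) := by
  show groverShift (groverCoin (tav d x i j)) = -(tav d x i j)
  rw [coin_tav, shift_neg, shift_tav]

lemma gam_ne (hij : i ≠ j) : gam d x i j ≠ 0 := by
  intro h
  have h1 := congrFun h (x, (i, true))
  have hxj : x ≠ x + Pi.single j (1 : ℤ) := (add_single_ne x j 1 one_ne_zero).symm
  simp [gam, deltaPt, Prod.ext_iff, hij, hxj] at h1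

lemma tav_ne (hij : i ≠ j) : tav d x i j ≠ 0 := by
  intro h
  have h1 := congrFun h (x, (i, true))
  have hxj : x ≠ x + Pi.single j (1 : ℤ) := (add_single_ne x j 1 one_ne_zero).symm
  simp [tav, deltaPt, Prod.ext_iff, hij, hxj] at h1

lemma gam_support : (Function.support (gam d x i j)).Finite := by
  refine Set.Finite.subset (s :=
    ({(x, (i, true)), (x + Pi.single i 1, (i, false)),
      (x + Pi.single i 1, (j, true)), (x + Pi.single i 1 + Pi.single j 1, (j, false)),
      (x + Pi.single i 1 + Pi.single j 1, (i, false)), (x + Pi.single j 1, (i, true)),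
      (x + Pi.single j 1, (j, false)), (x, (j, true))} : Set (Site d × ArcLabel d)))
    (by
      exact (((((((Set.finite_singleton _).insert _).insert _).insert _).insert _).insert _).insert _).insert _)
    ?_
  intro p hp
  simp only [Function.mem_support] at hp
  by_contra hc
  simp only [Set.mem_insert_iff, Set.mem_singleton_iff, not_or] at hc
  obtain ⟨n1, n2, n3, n4, n5, n6, n7, n8⟩ := hc
  exact hp (by simp [gam, deltaPt, n1, n2, n3, n4, n5, n6, n7, n8])

lemma tav_support : (Function.support (tav d x i j)).Finite := by
  refine Set.Finite.subset (s :=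
    ({(x, (i, true)), (x + Pi.single i 1, (i, false)),
      (x + Pi.single i 1, (j, true)), (x + Pi.single i 1 + Pi.single j 1, (j, false)),
      (x + Pi.single i 1 + Pi.single j 1, (i, false)), (x + Pi.single j 1, (i, true)),
      (x + Pi.single j 1, (j, false)), (x, (j, true))} : Set (Site d × ArcLabel d)))
    (by
      exact (((((((Set.finite_singleton _).insert _).insert _).insert _).insert _).insert _).insert _).insert _)
    ?_
  intro p hp
  simp only [Function.mem_support] at hp
  by_contra hc
  simp only [Set.mem_insert_iff, Set.mem_singleton_iff, not_or] at hc
  obtain ⟨n1, n2, n3, n4, n5, n6, n7, n8⟩ := hc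
  exact hp (by simp [tav, deltaPt, n1, n2, n3, n4, n5, n6, n7, n8])

end main

/-- For `d ≥ 2`, any site `x` and directions `i < j`, the unit-square cycle
vectors `γ = ∑_m (δ_{f_m} − δ_{f̄_m})` and `τ = ∑_m (−1)^m (δ_{f_m} + δ_{f̄_m})` satisfy
`Uγ = γ` and `Uτ = −τ`; in particular `1` and `−1` are eigenvalues of the Grover walk on `ℤ^d`
with compactly supported eigenvectors. -/
theorem grover_zd_cycle_eigenvectors (d : ℕ) (hd : 2 ≤ d) (x : Site d)
    (i j : Fin d) (hij : i < j) :
    let ei : Site d := Pi.single i 1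
    let ej : Site d := Pi.single j 1
    let f1 : Site d × ArcLabel d := (x, (i, true))
    let f2 : Site d × ArcLabel d := (x + ei, (j, true))
    let f3 : Site d × ArcLabel d := (x + ei + ej, (i, false))
    let f4 : Site d × ArcLabel d := (x + ej, (j, false))
    let g1 : Site d × ArcLabel d := (x + ei, (i, false))
    let g2 : Site d × ArcLabel d := (x + ei + ej, (j, false))
    let g3 : Site d × ArcLabel d := (x + ej, (i, true))
    let g4 : Site d × ArcLabel d := (x, (j, true))
    let γ := deltaPt f1 - deltaPt g1 + (deltaPt f2 - deltaPt g2) +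
      (deltaPt f3 - deltaPt g3) + (deltaPt f4 - deltaPt g4)
    let τ := -(deltaPt f1 + deltaPt g1) + (deltaPt f2 + deltaPt g2) -
      (deltaPt f3 + deltaPt g3) + (deltaPt f4 + deltaPt g4)
    groverU γ = γ ∧ groverU τ = -τ ∧ γ ≠ 0 ∧ τ ≠ 0 ∧
      (Function.support γ).Finite ∧ (Function.support τ).Finite := by
  intro ei ej f1 f2 f3 f4 g1 g2 g3 g4 γ τ
  have hij' : i ≠ j := ne_of_lt hij
  exact ⟨U_gam x i j, U_tav x i j, gam_ne x i j hij', tav_ne x i j hij',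
    gam_support x i j, tav_support x i j⟩
end

section
/- Let d ≥ 1 and let k ∈ ℝ^d satisfy |Σ_{j=1}^d cos k_j| < d and cos k_j ≠ 0 for every j. Let φ(k) = arccos( (1/d) Σ_{j=1}^d cos k_j ) ∈ (0,π), so that sin φ(k) > 0 and φ is smooth near k. Then the partial derivatives are x_j := ∂φ/∂k_j = sin k_j / (d sin φ(k)), and the determinant of the Hessian matrix of φ at k equals det(Hess φ)(k) = [ ∏_{l=1}^d ( cos k_l / (d sin φ(k)) ) ] · ( 1 − d cos φ(k) Σ_{j=1}^d x_j² / cos k_j ). -/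
open Finset

/-- `φ(k) = arccos((1/d) ∑_j cos k_j)`, the arccosine of the Fourier symbol of the simple
random walk on `ℤ^d`. -/
noncomputable def rwPhase (d : ℕ) (k : Fin d → ℝ) : ℝ :=
  Real.arccos ((1 / (d : ℝ)) * ∑ j, Real.cos (k j))

/-- the Hessian matrix of a function on `ℝ^d`, with entries the iterated directional
derivatives along the standard basis vectors -/
noncomputable def hessian (d : ℕ) (f : (Fin d → ℝ) → ℝ) (k : Fin d → ℝ) :
    Matrix (Fin d) (Fin d) ℝ :=
  Matrix.of fun l m =>
    fderiv ℝ (fun k' => fderiv ℝ f k' (Pi.single m 1)) k (Pi.single l 1)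

/-!
Write `φ = arccos ∘ g` with `g k = (1/d) ∑ cos k_j`. Since `sin φ = √(1 - g²)`, the chain rule
gives `∂_j φ = sin k_j / (d sin φ) =: x_j`. Differentiating `x_m = sin k_m · (d sin φ)⁻¹` once more,
using `∂_l sin φ = cos φ · x_l`, shows that the Hessian is a diagonal matrix plus a rank-one one,
`Hess φ = diag (cos k_l / (d sin φ)) - (cos φ / sin φ) x xᵀ`,
and the matrix determinant lemma evaluates its determinant.
-/

open Real Matrix

theorem Matrix.det_diagonal_add_replicateCol_mul_replicateRow {n K ι : Type*} [Fintype n]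
    [DecidableEq n] [Field K] [Unique ι] {a : n → K} (ha : ∀ i, a i ≠ 0) (u v : n → K) :
    (diagonal a + replicateCol ι u * replicateRow ι v).det
      = (∏ i, a i) * (1 + ∑ i, v i * u i / a i) := by
  have hdet : IsUnit (diagonal a).det := by
    rw [det_diagonal]
    exact (prod_ne_zero_iff.2 fun i _ => ha i).isUnit
  have hinv : (diagonal a)⁻¹ = diagonal a⁻¹ := inv_eq_left_inv <| by
    rw [diagonal_mul_diagonal, ← diagonal_one]
    exact congrArg diagonal (funext fun i => inv_mul_cancel₀ (ha i))
  rw [det_add_replicateCol_mul_replicateRow hdet, det_diagonal, hinv, det_unique]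
  congr 2
  simp only [Matrix.add_apply, one_apply_eq, mul_apply, replicateRow_apply, replicateCol_apply,
    diagonal_apply, mul_ite, mul_zero, sum_ite_eq', mem_univ, if_true, Pi.inv_apply]
  exact congrArg _ (sum_congr rfl fun i _ => by ring)

section SumCos

variable {ι : Type*} [Fintype ι]

theorem hasFDerivAt_sum_cos (k : ι → ℝ) :
    HasFDerivAt (fun k : ι → ℝ => ∑ j, cos (k j))
      (∑ j, (-sin (k j)) • (ContinuousLinearMap.proj j : (ι → ℝ) →L[ℝ] ℝ)) k :=
  HasFDerivAt.fun_sum fun j _ => (hasFDerivAt_apply j k).cos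

theorem sum_smul_proj_apply_single [DecidableEq ι] (v : ι → ℝ) (m : ι) :
    (∑ j, v j • (ContinuousLinearMap.proj j : (ι → ℝ) →L[ℝ] ℝ)) (Pi.single m 1) = v m := by
  simp [Pi.single_apply]

end SumCos

section RwPhase

variable {d : ℕ} {k : Fin d → ℝ}

theorem abs_mean_cos_lt_one (h : |∑ j, cos (k j)| < d) :
    |1 / (d : ℝ) * ∑ j, cos (k j)| < 1 := by
  have hd : (0 : ℝ) < d := (abs_nonneg _).trans_lt h
  rwa [abs_mul, abs_of_pos (one_div_pos.2 hd), one_div_mul_eq_div, div_lt_one hd]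

theorem sin_rwPhase_pos (h : |∑ j, cos (k j)| < d) : 0 < sin (rwPhase d k) := by
  obtain ⟨h₁, h₂⟩ := abs_lt.1 (abs_mean_cos_lt_one h)
  exact sin_pos_of_pos_of_lt_pi (arccos_pos.2 h₂) (arccos_lt_pi.2 h₁)

theorem isOpen_setOf_abs_sum_cos_lt : IsOpen {k : Fin d → ℝ | |∑ j, cos (k j)| < d} :=
  isOpen_lt (by fun_prop) continuous_const

theorem hasFDerivAt_rwPhase (h : |∑ j, cos (k j)| < d) :
    HasFDerivAt (rwPhase d)
      (∑ j, (sin (k j) / (d * sin (rwPhase d k))) •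
        (ContinuousLinearMap.proj j : (Fin d → ℝ) →L[ℝ] ℝ)) k := by
  obtain ⟨h₁, h₂⟩ := abs_lt.1 (abs_mean_cos_lt_one h)
  have hcomp := (hasDerivAt_arccos h₁.ne' h₂.ne).comp_hasFDerivAt k
    ((hasFDerivAt_sum_cos k).const_mul (1 / (d : ℝ)))
  refine HasFDerivAt.congr_fderiv (f := rwPhase d) hcomp ?_
  rw [show sin (rwPhase d k) = _ from sin_arccos _, smul_sum, smul_sum]
  refine sum_congr rfl fun j _ => ?_
  rw [smul_smul, smul_smul]
  congr 1
  ring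

theorem fderiv_rwPhase_single (h : |∑ j, cos (k j)| < d) (m : Fin d) :
    fderiv ℝ (rwPhase d) k (Pi.single m 1) = sin (k m) / (d * sin (rwPhase d k)) := by
  rw [(hasFDerivAt_rwPhase h).fderiv, sum_smul_proj_apply_single]

theorem hessian_rwPhase_apply (h : |∑ j, cos (k j)| < d) (l m : Fin d) :
    hessian d (rwPhase d) k l m
      = (if l = m then cos (k l) / (d * sin (rwPhase d k)) else 0)
        - cos (rwPhase d k) / sin (rwPhase d k) * (sin (k l) / (d * sin (rwPhase d k)))
          * (sin (k m) / (d * sin (rwPhase d k))) := by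
  have hd : (0 : ℝ) < d := (abs_nonneg _).trans_lt h
  have hs := sin_rwPhase_pos h
  have hgrad : (fun k' => fderiv ℝ (rwPhase d) k' (Pi.single m 1))
      =ᶠ[nhds k] fun k' => sin (k' m) * (d * sin (rwPhase d k'))⁻¹ :=
    Filter.eventually_of_mem (isOpen_setOf_abs_sum_cos_lt.mem_nhds h) fun k' hk' =>
      (fderiv_rwPhase_single hk' m).trans (div_eq_mul_inv _ _)
  have hnum : HasFDerivAt (fun k' : Fin d → ℝ => sin (k' m))
      (cos (k m) • ContinuousLinearMap.proj m) k :=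
    (hasFDerivAt_apply m k).sin
  have hden : HasFDerivAt (fun k' => ((d : ℝ) * sin (rwPhase d k'))⁻¹) _ k :=
    (hasDerivAt_inv (by positivity)).comp_hasFDerivAt k
      ((hasFDerivAt_rwPhase h).sin.const_mul (d : ℝ))
  rw [hessian, of_apply, hgrad.fderiv_eq, (hnum.fun_mul hden).fderiv]
  simp only [neg_smul, smul_neg, _root_.mul_inv_rev, _root_.add_apply, _root_.neg_apply,
    _root_.smul_apply, _root_.sum_apply, ContinuousLinearMap.proj_apply, Pi.single_apply,
    smul_eq_mul, mul_ite, mul_one, mul_zero, sum_ite_eq', mem_univ, if_true]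
  obtain rfl | hlm := eq_or_ne l m
  · simp only [if_true]
    field_simp
    ring
  · simp only [if_neg hlm, if_neg hlm.symm]
    field_simp
    ring

theorem hessian_rwPhase (h : |∑ j, cos (k j)| < d) :
    hessian d (rwPhase d) k
      = diagonal (fun l => cos (k l) / (d * sin (rwPhase d k)))
        + replicateCol Unit (fun l => sin (k l) / (d * sin (rwPhase d k)))
          * replicateRow Unit (fun m => -(cos (rwPhase d k) / sin (rwPhase d k))
              * (sin (k m) / (d * sin (rwPhase d k)))) := by
  ext l m
  rw [hessian_rwPhase_apply h, Matrix.add_apply, diagonal_apply, mul_apply]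
  simp only [replicateCol_apply, replicateRow_apply, univ_unique, sum_singleton]
  split_ifs <;> ring

end RwPhase

theorem rwPhase_hessian_det_general (d : ℕ) (k : Fin d → ℝ)
    (h1 : |∑ j, Real.cos (k j)| < d) (h2 : ∀ j, Real.cos (k j) ≠ 0) :
    (∀ j, fderiv ℝ (rwPhase d) k (Pi.single j 1)
      = Real.sin (k j) / (d * Real.sin (rwPhase d k))) ∧
    (hessian d (rwPhase d) k).det
      = (∏ l, Real.cos (k l) / (d * Real.sin (rwPhase d k))) *
        (1 - d * Real.cos (rwPhase d k) *
          ∑ j, (Real.sin (k j) / (d * Real.sin (rwPhase d k))) ^ 2 / Real.cos (k j)) := by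
  refine ⟨fderiv_rwPhase_single h1, ?_⟩
  have hd : (0 : ℝ) < d := (abs_nonneg _).trans_lt h1
  have hs := sin_rwPhase_pos h1
  rw [hessian_rwPhase h1, det_diagonal_add_replicateCol_mul_replicateRow
    fun l => div_ne_zero (h2 l) (by positivity)]
  congr 1
  rw [sub_eq_add_neg, mul_sum, ← sum_neg_distrib]
  refine congrArg _ (sum_congr rfl fun j _ => ?_)
  field_simp [h2 j]

/-- If `|∑_j cos k_j| < d` and `cos k_j ≠ 0` for every `j`, then the partial
derivatives of `φ(k) = arccos((1/d) ∑ cos k_j)` are `x_j = sin k_j / (d sin φ(k))` and the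
Hessian determinant is
`det Hess φ (k) = (∏_l cos k_l / (d sin φ(k))) (1 − d cos φ(k) ∑_j x_j² / cos k_j)`. -/
theorem rwPhase_hessian_det (d : ℕ) (hd : 1 ≤ d) (k : Fin d → ℝ)
    (h1 : |∑ j, Real.cos (k j)| < d) (h2 : ∀ j, Real.cos (k j) ≠ 0) :
    (∀ j, fderiv ℝ (rwPhase d) k (Pi.single j 1)
      = Real.sin (k j) / (d * Real.sin (rwPhase d k))) ∧
    (hessian d (rwPhase d) k).det
      = (∏ l, Real.cos (k l) / (d * Real.sin (rwPhase d k))) *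
        (1 - d * Real.cos (rwPhase d k) *
          ∑ j, (Real.sin (k j) / (d * Real.sin (rwPhase d k))) ^ 2 / Real.cos (k j)) :=
  rwPhase_hessian_det_general d k h1 h2
end
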